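/- arXiv:1709.05045 — 4 statements merged into one kernel-verified Lean document; each statement's English description precedes it below -/
import Mathlib

section
/- Soundness of one-step unfolding (abstract Step rule): let (S, →) be a transition system and T a set of terminal states. Suppose (i) every state in A \ B has at least one successor (in particular A \ B is disjoint from T), and (ii) for every a ∈ A \ B and every successor a' of a (i.e., a → a'), the relation {a'} →⊛ B holds relative to T. Then A →⊛ B holds relative to T. -/
/-- A finite path p 0 → p 1 → ⋯ → p n in a transition system. -/
def IsPath {S : Type*} (r : S → S → Prop) (p : ℕ → S) (n : ℕ) : Prop :=
  ∀ k < n, r (p k) (p (k + 1))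

/-- `A →⊛ B` holds relative to `T`: every finite path starting in `A` and
ending in `T` passes through a state of `B`. -/
def RLHolds {S : Type*} (r : S → S → Prop) (T A B : Set S) : Prop :=
  ∀ (p : ℕ → S) (n : ℕ), IsPath r p n → p 0 ∈ A → p n ∈ T → ∃ k ≤ n, p k ∈ B

/-- A state is terminal iff it has no outgoing transition. -/
def Terminal {S : Type*} (r : S → S → Prop) (s : S) : Prop := ¬ ∃ t, r s t

section

variable {S : Type*} {r : S → S → Prop}

theorem IsPath.tail {p : ℕ → S} {n : ℕ} (hp : IsPath r p (n + 1)) :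
    IsPath r (fun k => p (k + 1)) n :=
  fun k hk => hp (k + 1) (Nat.succ_lt_succ hk)

theorem RLHolds.of_succ {T A B : Set S} (hdisj : ∀ a ∈ A \ B, a ∉ T)
    (hstep : ∀ a ∈ A \ B, ∀ a', r a a' → RLHolds r T {a'} B) :
    RLHolds r T A B := by
  intro p n hp hA hT
  by_cases hB : p 0 ∈ B
  · exact ⟨0, Nat.zero_le n, hB⟩
  cases n with
  | zero => exact absurd hT (hdisj _ ⟨hA, hB⟩)
  | succ m =>
    obtain ⟨k, hk, hkB⟩ :=
      hstep _ ⟨hA, hB⟩ _ (hp 0 m.succ_pos) (fun k => p (k + 1)) m hp.tail rfl hT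
    exact ⟨k + 1, Nat.succ_le_succ hk, hkB⟩

end

theorem stmt_5 {S : Type*} (r : S → S → Prop) (T A B : Set S)
    (hT : ∀ t ∈ T, Terminal r t)
    (hsucc : ∀ a ∈ A \ B, ∃ a', r a a')
    (hstep : ∀ a ∈ A \ B, ∀ a', r a a' → RLHolds r T {a'} B) :
    RLHolds r T A B :=
  RLHolds.of_succ (fun a ha haT => hT a haT (hsucc a ha)) hstep
end

section
/- Solution of the invariant paradox (abstract stop-transformation): let (S, →) be a transition system, S₀, P ⊆ S. Define a new transition system on S' = S ⊕ S (two disjoint copies of S, written s for the first copy and [s] for the second) with transitions s →' t whenever s → t, together with s →' [s] for every s ∈ S, and no transitions out of second-copy states. Let T' = { [s] | s ∈ S } and [P] = { [p] | p ∈ P }. Then Reach(S₀) ⊆ P in (S, →) if and only if S₀ →⊛ [P] holds in (S', →') relative to T'. -/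
/-- The set of states reachable from `S₀`. -/
def Reach {S : Type*} (r : S → S → Prop) (S₀ : Set S) : Set S :=
  {s | ∃ s₀ ∈ S₀, Relation.ReflTransGen r s₀ s}

/-- The stop-transformed transition relation on two disjoint copies of `S`:
first-copy transitions mimic `r`, each first-copy state may stop into its
second copy, and second-copy states are terminal. -/
def stepStop {S : Type*} (r : S → S → Prop) : S ⊕ S → S ⊕ S → Prop
  | Sum.inl s, Sum.inl t => r s t
  | Sum.inl s, Sum.inr t => s = t
  | Sum.inr _, _ => False

/-!
A →'-path from `s₀` to a second-copy state `[t]` projects to an `r`-run `s₀ →* t`, so if every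
reachable state lies in `P`, the path's last state already lies in `[P]`. Conversely, an `r`-run
`s₀ →* s` followed by the stop step `s →' [s]` is such a path; since second-copy states are
terminal, the only state of `[P]` it can meet is its last one, `[s]`, so `s ∈ P`.
-/

open Relation

section

variable {S : Type*} {r : S → S → Prop}

namespace IsPath

variable {p : ℕ → S} {n : ℕ}

theorem reflTransGen (hp : IsPath r p n) : ReflTransGen r (p 0) (p n) := by
  induction n with
  | zero => exact .refl
  | succ n ih => exact (ih fun k hk => hp k (by omega)).tail (hp n n.lt_succ_self)

theorem eq_of_terminal (hp : IsPath r p n) {k : ℕ} (hk : k ≤ n) (ht : Terminal r (p k)) :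
    k = n :=
  by_contra fun hkn => ht ⟨_, hp k (lt_of_le_of_ne hk hkn)⟩

end IsPath

theorem Relation.ReflTransGen.exists_isPath {a b : S} (h : ReflTransGen r a b) :
    ∃ p n, IsPath r p n ∧ p 0 = a ∧ p n = b := by
  induction h using ReflTransGen.head_induction_on with
  | refl => exact ⟨fun _ => b, 0, fun _ hk => absurd hk (Nat.not_lt_zero _), rfl, rfl⟩
  | @head a c hac _ ih =>
    obtain ⟨p, n, hp, h0, hn⟩ := ih
    refine ⟨fun | 0 => a | k + 1 => p k, n + 1, ?_, rfl, hn⟩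
    rintro (_ | k) hk
    · exact (h0 ▸ hac : r a (p 0))
    · exact hp k (by omega)

theorem terminal_stepStop_inr (s : S) : Terminal (stepStop r) (Sum.inr s) := by
  rintro ⟨t, h⟩
  cases t <;> exact h

theorem reflTransGen_stepStop_inl_inr {a b : S} (h : ReflTransGen r a b) :
    ReflTransGen (stepStop r) (Sum.inl a) (Sum.inr b) :=
  (h.lift Sum.inl fun _ _ => id).tail (rfl : b = b)

/-- Forgetting which copy a state lies in turns `stepStop r`-runs into `r`-runs. -/
theorem Relation.ReflTransGen.of_stepStop {x y : S ⊕ S} (h : ReflTransGen (stepStop r) x y) :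
    ReflTransGen r (Sum.elim id id x) (Sum.elim id id y) :=
  h.lift' _ fun
    | .inl _, .inl _, hst => .single hst
    | .inl _, .inr _, rfl => .refl

end

theorem stmt_10 {S : Type*} (r : S → S → Prop) (S₀ P : Set S) :
    Reach r S₀ ⊆ P ↔
      RLHolds (stepStop r) (Set.range Sum.inr) (Sum.inl '' S₀) (Sum.inr '' P) := by
  constructor
  · rintro hReach p n hp ⟨s₀, hs₀, h0⟩ ⟨t, ht⟩
    refine ⟨n, le_rfl, t, hReach ⟨s₀, hs₀, ?_⟩, ht⟩
    simpa only [← h0, ← ht, Sum.elim_inl, Sum.elim_inr, id] using hp.reflTransGen.of_stepStop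
  · rintro hRL s ⟨s₀, hs₀, hs⟩
    obtain ⟨p, n, hp, h0, hn⟩ := (reflTransGen_stepStop_inl_inr hs).exists_isPath
    obtain ⟨k, hk, t, ht, hpk⟩ := hRL p n hp ⟨s₀, hs₀, h0.symm⟩ ⟨s, hn.symm⟩
    obtain rfl := hp.eq_of_terminal hk (hpk ▸ terminal_stepStop_inr t)
    exact Sum.inr_injective (hpk.trans hn) ▸ ht
end

section
/- Circularity-style invariant proof (abstract form of Corollary on invariants): let (S, →) be a transition system and S₀, P ⊆ S with S₀ ⊆ P. Using the stop-transformation (S', →', T', [·]) of the previous context, if P →⊛ [P] holds in (S', →') relative to T', then Reach(S₀) ⊆ P in (S, →). -/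
theorem RLHolds.mem_of_isPath_two {S : Type*} {r : S → S → Prop} {T A B : Set S} {a b c : S}
    (h : RLHolds r T A B) (hab : r a b) (hbc : r b c) (ha : a ∈ A) (hc : c ∈ T) :
    a ∈ B ∨ b ∈ B ∨ c ∈ B := by
  have hpath : IsPath r (fun k => [a, b, c].getD k c) 2 := by
    intro k hk
    interval_cases k <;> assumption
  obtain ⟨k, hk, hkB⟩ := h _ 2 hpath ha hc
  interval_cases k <;> simp_all

/-- The path `x →' y →' [y]` shows that `P →⊛ [P]` forces `P` to be closed under `r`. -/
theorem mem_of_rlHolds_stepStop {S : Type*} {r : S → S → Prop} {P : Set S}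
    (h : RLHolds (stepStop r) (Set.range Sum.inr) (Sum.inl '' P) (Sum.inr '' P))
    {x y : S} (hx : x ∈ P) (hxy : r x y) : y ∈ P := by
  have hstep : stepStop r (Sum.inl x) (Sum.inl y) := hxy
  have hstop : stepStop r (Sum.inl y) (Sum.inr y) := rfl
  rcases h.mem_of_isPath_two hstep hstop (Set.mem_image_of_mem _ hx) (Set.mem_range_self y)
    with ⟨_, _, ⟨⟩⟩ | ⟨_, _, ⟨⟩⟩ | ⟨_, hy, ⟨⟩⟩
  exact hy

theorem reach_subset_of_closed {S : Type*} {r : S → S → Prop} {S₀ P : Set S}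
    (h₀ : S₀ ⊆ P) (hP : ∀ ⦃x y⦄, x ∈ P → r x y → y ∈ P) : Reach r S₀ ⊆ P := by
  rintro s ⟨s₀, hs₀, hs⟩
  induction hs with
  | refl => exact h₀ hs₀
  | tail _ hyz ih => exact hP ih hyz

theorem stmt_11 {S : Type*} (r : S → S → Prop) (S₀ P : Set S)
    (h₀ : S₀ ⊆ P)
    (h : RLHolds (stepStop r) (Set.range Sum.inr) (Sum.inl '' P) (Sum.inr '' P)) :
    Reach r S₀ ⊆ P :=
  reach_subset_of_closed h₀ fun _ _ hx hxy => mem_of_rlHolds_stepStop h hx hxy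
end

section
/- Semantics of pattern conjunction via complete unifier sets: with the pattern semantics ⟦u ∣ φ⟧ = { a | ∃ρ, a = ⟦u⟧ρ ∧ M,ρ ⊨ φρ } over disjoint-variable patterns (u ∣ φ) and (v ∣ ψ), and given a set U of substitutions that is a complete set of unifiers of u and v with respect to M (i.e., ⟦u⟧ρ = ⟦v⟧ρ for a ground assignment ρ iff ρ factors through some α ∈ U), we have ⟦u ∣ φ⟧ ∩ ⟦v ∣ ψ⟧ = ⋃_{α ∈ U} ⟦uα ∣ (φ ∧ ψ)α⟧. -/
/-!
Disjointness of variables lets a witness `ρ₁` of `⟦u ∣ φ⟧` and a witness `ρ₂` of `⟦v ∣ ψ⟧`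
for the same element be merged into one assignment `ρ` with `⟦u⟧ρ = ⟦v⟧ρ` satisfying
`φ ∧ ψ`. So the intersection is `⟦u ∣ u = v ∧ φ ∧ ψ⟧`, and completeness of `U` rewrites the
unification constraint as "`ρ` factors through some `α ∈ U`"; the part of this pattern whose
assignments factor through `α` is exactly `⟦uα ∣ (φ ∧ ψ)α⟧`.
-/

namespace Pattern

variable {X Term M : Type*} (eval : Term → (X → M) → M)

/-- The semantics `⟦u ∣ φ⟧` of the pattern `(u ∣ φ)`. -/
def sem (u : Term) (φ : (X → M) → Prop) : Set M :=
  {a | ∃ ρ, a = eval u ρ ∧ φ ρ}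

def FactorsThrough (ρ : X → M) (α : X → Term) : Prop :=
  ∃ τ : X → M, ∀ x, ρ x = eval (α x) τ

variable {eval}

theorem sem_congr {u : Term} {φ ψ : (X → M) → Prop} (h : ∀ ρ, φ ρ ↔ ψ ρ) :
    sem eval u φ = sem eval u ψ := by
  simp only [sem, h]

theorem sem_biUnion {ι : Type*} (u : Term) (s : Set ι) (φ : ι → (X → M) → Prop) :
    sem eval u (fun ρ => ∃ i ∈ s, φ i ρ) = ⋃ i ∈ s, sem eval u (φ i) := by
  ext a
  simp only [sem, Set.mem_ofPred_eq, Set.mem_iUnion, exists_prop]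
  constructor
  · rintro ⟨ρ, rfl, i, hi, hφ⟩
    exact ⟨i, hi, ρ, rfl, hφ⟩
  · rintro ⟨i, hi, ρ, rfl, hφ⟩
    exact ⟨ρ, rfl, i, hi, hφ⟩

theorem sem_inter_sem {u v : Term} {φ ψ : (X → M) → Prop}
    (hdisj : ∀ ρ ρ' : X → M, ∃ ρ'' : X → M,
      eval u ρ'' = eval u ρ ∧ (φ ρ'' ↔ φ ρ) ∧
      eval v ρ'' = eval v ρ' ∧ (ψ ρ'' ↔ ψ ρ')) :
    sem eval u φ ∩ sem eval v ψ =
      sem eval u (fun ρ => eval u ρ = eval v ρ ∧ φ ρ ∧ ψ ρ) := by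
  ext a
  constructor
  · rintro ⟨⟨ρ₁, rfl, hφ⟩, ρ₂, hv, hψ⟩
    obtain ⟨ρ, hu, hφρ, hvρ, hψρ⟩ := hdisj ρ₁ ρ₂
    exact ⟨ρ, hu.symm, by rw [hu, hvρ, hv], hφρ.mpr hφ, hψρ.mpr hψ⟩
  · rintro ⟨ρ, rfl, huv, hφ, hψ⟩
    exact ⟨⟨ρ, rfl, hφ⟩, ρ, huv, hψ⟩

theorem sem_subst {tsubst : Term → (X → Term) → Term}
    (hcomp : ∀ (t : Term) (α : X → Term) (ρ : X → M),
      eval (tsubst t α) ρ = eval t (fun x => eval (α x) ρ))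
    (u : Term) (α : X → Term) (φ : (X → M) → Prop) :
    sem eval (tsubst u α) (fun τ => φ (fun x => eval (α x) τ)) =
      sem eval u (fun ρ => FactorsThrough eval ρ α ∧ φ ρ) := by
  ext a
  constructor
  · rintro ⟨τ, rfl, hφ⟩
    exact ⟨_, hcomp u α τ, ⟨τ, fun _ => rfl⟩, hφ⟩
  · rintro ⟨ρ, rfl, ⟨τ, hτ⟩, hφ⟩
    obtain rfl : ρ = fun x => eval (α x) τ := funext hτ
    exact ⟨τ, (hcomp u α τ).symm, hφ⟩

end Pattern

open Pattern

theorem stmt_15 {X Term M : Type*}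
    (eval : Term → (X → M) → M)
    (tsubst : Term → (X → Term) → Term)
    (hcomp : ∀ (t : Term) (α : X → Term) (ρ : X → M),
      eval (tsubst t α) ρ = eval t (fun x => eval (α x) ρ))
    (u v : Term) (Φ Ψ : (X → M) → Prop)
    -- disjointness of the variables of (u ∣ Φ) and (v ∣ Ψ)
    (hdisj : ∀ ρ ρ' : X → M, ∃ ρ'' : X → M,
      eval u ρ'' = eval u ρ ∧ (Φ ρ'' ↔ Φ ρ) ∧
      eval v ρ'' = eval v ρ' ∧ (Ψ ρ'' ↔ Ψ ρ'))
    (U : Set (X → Term))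
    -- `U` is a complete set of unifiers of `u` and `v` w.r.t. `M`:
    -- a ground assignment unifies `u` and `v` iff it factors through some `α ∈ U`
    (hU : ∀ ρ : X → M, eval u ρ = eval v ρ ↔
      ∃ α ∈ U, ∃ τ : X → M, ∀ x, ρ x = eval (α x) τ) :
    {a : M | ∃ ρ : X → M, a = eval u ρ ∧ Φ ρ} ∩
      {a : M | ∃ ρ : X → M, a = eval v ρ ∧ Ψ ρ} =
    ⋃ α ∈ U, {a : M | ∃ ρ : X → M, a = eval (tsubst u α) ρ ∧
      (Φ (fun x => eval (α x) ρ) ∧ Ψ (fun x => eval (α x) ρ))} :=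
  calc sem eval u Φ ∩ sem eval v Ψ
      = sem eval u (fun ρ => eval u ρ = eval v ρ ∧ Φ ρ ∧ Ψ ρ) := sem_inter_sem hdisj
    _ = sem eval u (fun ρ => ∃ α ∈ U, FactorsThrough eval ρ α ∧ Φ ρ ∧ Ψ ρ) :=
        sem_congr fun ρ => by simp only [hU ρ, FactorsThrough, ← exists_and_right, and_assoc]
    _ = ⋃ α ∈ U, sem eval u (fun ρ => FactorsThrough eval ρ α ∧ Φ ρ ∧ Ψ ρ) :=
        sem_biUnion u U _
    _ = ⋃ α ∈ U, sem eval (tsubst u α)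
          (fun τ => Φ (fun x => eval (α x) τ) ∧ Ψ (fun x => eval (α x) τ)) := by
        simp only [sem_subst hcomp u _ fun ρ => Φ ρ ∧ Ψ ρ]
end
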